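/- Let k: [0,∞) → [0,∞) be measurable with exponential decay (k(z) ≤ α e^{-βz}), define on ℝ^m the half-space moment function m_1^∂(b) := ∫_{{z : z_m < b}} z_m k(|z|²) dz for b ≥ 0 (using b in place of b_x/ε). Then ∫_0^∞ m_1^∂(b) db = -(1/2) ∫_{ℝ^m} z_m² k(|z|²) dz = -m_2/2, where m_2 = ∫_{ℝ^m} z_1² k(|z|²) dz. -/

import Mathlib

noncomputable section
open MeasureTheory

namespace FirstMomentAux

lemma integrable_gauss (m : ℕ) {c : ℝ} (hc : 0 < c) :
    Integrable (fun z : EuclideanSpace ℝ (Fin m) => Real.exp (-c * ‖z‖ ^ 2)) := by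
  have h := (GaussianFourier.integrable_cexp_neg_mul_sq_norm_add
      (V := EuclideanSpace ℝ (Fin m)) (b := (c : ℂ)) (by simpa using hc) 0 0).norm
  convert h using 2 with v
  rw [Complex.norm_exp]
  norm_num
  left
  norm_cast

lemma measurable_coord (m : ℕ) (i : Fin m) :
    Measurable fun z : EuclideanSpace ℝ (Fin m) => z i :=
  (EuclideanSpace.proj (𝕜 := ℝ) i).continuous.measurable

lemma abs_coord_le (m : ℕ) (i : Fin m) (z : EuclideanSpace ℝ (Fin m)) : |z i| ≤ ‖z‖ := by
  have h1 : (z i) ^ 2 ≤ ‖z‖ ^ 2 := by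
    rw [EuclideanSpace.norm_eq, Real.sq_sqrt (Finset.sum_nonneg fun j _ => sq_nonneg _)]
    simpa [sq_abs] using Finset.single_le_sum (f := fun j => ‖z j‖ ^ 2)
      (fun j _ => sq_nonneg _) (Finset.mem_univ i)
  calc |z i| = Real.sqrt ((z i) ^ 2) := (Real.sqrt_sq_eq_abs _).symm
    _ ≤ Real.sqrt (‖z‖ ^ 2) := Real.sqrt_le_sqrt h1
    _ = ‖z‖ := by rw [Real.sqrt_sq (norm_nonneg _)]

lemma key_bound {a : ℝ} (t : ℝ) (ha : 0 < a) :
    t * Real.exp (-a * t) ≤ (2 / a) * Real.exp (-(a / 2) * t) := by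
  have h1 : (a / 2) * t ≤ Real.exp ((a / 2) * t) := by
    have := Real.add_one_le_exp ((a / 2) * t); linarith
  have h2 : t ≤ (2 / a) * Real.exp ((a / 2) * t) := by
    have key : (2 / a) * ((a / 2) * t) = t := by field_simp
    calc t = (2 / a) * ((a / 2) * t) := key.symm
      _ ≤ (2 / a) * Real.exp ((a / 2) * t) :=
        mul_le_mul_of_nonneg_left h1 (by positivity)
  calc t * Real.exp (-a * t) ≤ ((2 / a) * Real.exp ((a / 2) * t)) * Real.exp (-a * t) :=
        mul_le_mul_of_nonneg_right h2 (Real.exp_pos _).le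
    _ = (2 / a) * Real.exp (-(a / 2) * t) := by
        rw [mul_assoc, ← Real.exp_add]; ring_nf

lemma integral_comp_neg' (m : ℕ) (g : EuclideanSpace ℝ (Fin m) → ℝ) :
    ∫ z, g (-z) = ∫ z, g z := by
  have h := (LinearIsometryEquiv.neg ℝ (E := EuclideanSpace ℝ (Fin m))).measurePreserving.integral_comp
      (LinearIsometryEquiv.neg ℝ (E := EuclideanSpace ℝ (Fin m))).toHomeomorph.measurableEmbedding g
  simpa using h

lemma integrable_comp_neg' (m : ℕ) (g : EuclideanSpace ℝ (Fin m) → ℝ) (hg : Integrable g) :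
    Integrable fun z => g (-z) := by
  have h := (LinearIsometryEquiv.neg ℝ (E := EuclideanSpace ℝ (Fin m))).measurePreserving.integrable_comp_emb
      (LinearIsometryEquiv.neg ℝ (E := EuclideanSpace ℝ (Fin m))).toHomeomorph.measurableEmbedding
      (g := g)
  exact h.2 hg

lemma swap_coord (m : ℕ) (i j : Fin m) (g : ℝ → ℝ) :
    (∫ z : EuclideanSpace ℝ (Fin m), (z j) ^ 2 * g (‖z‖ ^ 2)) =
    ∫ z : EuclideanSpace ℝ (Fin m), (z i) ^ 2 * g (‖z‖ ^ 2) := by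
  have h := (LinearIsometryEquiv.piLpCongrLeft 2 ℝ ℝ (Equiv.swap i j)).measurePreserving.integral_comp
      (LinearIsometryEquiv.piLpCongrLeft 2 ℝ ℝ (Equiv.swap i j)).toHomeomorph.measurableEmbedding
      (fun z : EuclideanSpace ℝ (Fin m) => (z j) ^ 2 * g (‖z‖ ^ 2))
  rw [← h]
  congr 1
  funext z
  have h1 : (LinearIsometryEquiv.piLpCongrLeft 2 ℝ ℝ (Equiv.swap i j) z) j = z i := by
    simp [LinearIsometryEquiv.piLpCongrLeft_apply, Equiv.piCongrLeft'_apply]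
  have h2 : ‖LinearIsometryEquiv.piLpCongrLeft 2 ℝ ℝ (Equiv.swap i j) z‖ = ‖z‖ :=
    (LinearIsometryEquiv.piLpCongrLeft 2 ℝ ℝ (Equiv.swap i j)).norm_map z
  rw [h1, h2]

/-- Fubini step: swapping the order of integration. -/
lemma fubini_part (m : ℕ) (i : Fin m) (F : EuclideanSpace ℝ (Fin m) → ℝ)
    (hFm : Measurable F)
    (hHnormi : Integrable fun z : EuclideanSpace ℝ (Fin m) => max (z i) 0 * ‖F z‖) :
    (∫ b in Set.Ioi (0 : ℝ), ∫ z in {z : EuclideanSpace ℝ (Fin m) | b ≤ z i}, F z) =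
      ∫ z : EuclideanSpace ℝ (Fin m), max (z i) 0 * F z := by
  set μ := volume.restrict (Set.Ioi (0 : ℝ)) with hμ
  set T : Set (ℝ × EuclideanSpace ℝ (Fin m)) := {p | p.1 ≤ p.2 i} with hT
  have hTm : MeasurableSet T :=
    measurableSet_le measurable_fst ((measurable_coord m i).comp measurable_snd)
  have hum : AEStronglyMeasurable (T.indicator fun p => F p.2) (μ.prod volume) :=
    ((hFm.comp measurable_snd).indicator hTm).aestronglyMeasurable
  have hsec : ∀ z : EuclideanSpace ℝ (Fin m),
      (fun b => T.indicator (fun p : ℝ × EuclideanSpace ℝ (Fin m) => F p.2) (b, z)) =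
      (Set.Iic (z i)).indicator fun _ => F z := by
    intro z; funext b
    by_cases h : b ≤ z i <;> simp [hT, Set.indicator, h]
  have hμIic : ∀ t : ℝ, (μ (Set.Iic t)).toReal = max t 0 := by
    intro t
    rw [hμ, Measure.restrict_apply measurableSet_Iic, Set.inter_comm, Set.Ioi_inter_Iic,
      Real.volume_Ioc]
    rw [ENNReal.toReal_ofReal']
    ring_nf
  have hInt : Integrable (T.indicator fun p => F p.2) (μ.prod volume) := by
    rw [integrable_prod_iff' hum]
    constructor
    · refine Filter.Eventually.of_forall fun z => ?_
      rw [show (fun b => T.indicator (fun p : ℝ × EuclideanSpace ℝ (Fin m) => F p.2) (b, z)) =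
          (Set.Iic (z i)).indicator fun _ => F z from hsec z]
      rw [integrable_indicator_iff measurableSet_Iic]
      refine integrableOn_const ?_
      rw [hμ, Measure.restrict_apply measurableSet_Iic, Set.inter_comm, Set.Ioi_inter_Iic]
      exact measure_Ioc_lt_top.ne
    · have heq : (fun z : EuclideanSpace ℝ (Fin m) =>
          ∫ b, ‖T.indicator (fun p : ℝ × EuclideanSpace ℝ (Fin m) => F p.2) (b, z)‖ ∂μ) =
          fun z => max (z i) 0 * ‖F z‖ := by
        funext z
        have h1 : (fun b => ‖T.indicator (fun p : ℝ × EuclideanSpace ℝ (Fin m) => F p.2) (b, z)‖) =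
            (Set.Iic (z i)).indicator fun _ => ‖F z‖ := by
          funext b; by_cases h : b ≤ z i <;> simp [hT, Set.indicator, h]
        rw [h1, integral_indicator measurableSet_Iic, setIntegral_const, smul_eq_mul, measureReal_def, hμIic]
      rw [heq]; exact hHnormi
  have hswap := integral_integral_swap
    (f := fun (b : ℝ) (z : EuclideanSpace ℝ (Fin m)) =>
      T.indicator (fun p : ℝ × EuclideanSpace ℝ (Fin m) => F p.2) (b, z)) hInt
  have hlhs : ∀ b : ℝ,
      (∫ z, T.indicator (fun p : ℝ × EuclideanSpace ℝ (Fin m) => F p.2) (b, z)) =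
      ∫ z in {z : EuclideanSpace ℝ (Fin m) | b ≤ z i}, F z := by
    intro b
    have h1 : (fun z : EuclideanSpace ℝ (Fin m) =>
        T.indicator (fun p : ℝ × EuclideanSpace ℝ (Fin m) => F p.2) (b, z)) =
        ({z : EuclideanSpace ℝ (Fin m) | b ≤ z i}).indicator F := by
      funext z; by_cases h : b ≤ z i <;> simp [hT, Set.indicator, h]
    rw [h1, integral_indicator (measurableSet_le measurable_const (measurable_coord m i))]
  have hrhs : ∀ z : EuclideanSpace ℝ (Fin m),
      (∫ b, T.indicator (fun p : ℝ × EuclideanSpace ℝ (Fin m) => F p.2) (b, z) ∂μ) =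
      max (z i) 0 * F z := by
    intro z
    rw [hsec z, integral_indicator measurableSet_Iic, setIntegral_const, smul_eq_mul, measureReal_def, hμIic]
  calc (∫ b in Set.Ioi (0 : ℝ), ∫ z in {z : EuclideanSpace ℝ (Fin m) | b ≤ z i}, F z)
      = ∫ b, (∫ z, T.indicator (fun p : ℝ × EuclideanSpace ℝ (Fin m) => F p.2) (b, z)) ∂μ := by
        rw [hμ]; exact integral_congr_ae (Filter.Eventually.of_forall fun b => (hlhs b).symm)
    _ = ∫ z, (∫ b, T.indicator (fun p : ℝ × EuclideanSpace ℝ (Fin m) => F p.2) (b, z) ∂μ) := hswap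
    _ = ∫ z : EuclideanSpace ℝ (Fin m), max (z i) 0 * F z :=
        integral_congr_ae (Filter.Eventually.of_forall fun z => hrhs z)

end FirstMomentAux

namespace FirstMomentAux

lemma main_aux (m : ℕ) (i : Fin m) (k : ℝ → ℝ) (hmeas : Measurable k)
    (hknn : ∀ s, 0 ≤ s → 0 ≤ k s) (α β : ℝ) (hα : 0 < α) (hβ : 0 < β)
    (hdecay : ∀ s, 0 ≤ s → k s ≤ α * Real.exp (-β * s)) :
    (∫ b in Set.Ioi (0 : ℝ),
        ∫ z in {z : EuclideanSpace ℝ (Fin m) | z i < b}, z i * k (‖z‖ ^ 2)) =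
      -(1 / 2) * ∫ z : EuclideanSpace ℝ (Fin m), (z i) ^ 2 * k (‖z‖ ^ 2) := by
  set F : EuclideanSpace ℝ (Fin m) → ℝ := fun z => z i * k (‖z‖ ^ 2) with hFdef
  set G : EuclideanSpace ℝ (Fin m) → ℝ := fun z => (z i) ^ 2 * k (‖z‖ ^ 2) with hGdef
  set H : EuclideanSpace ℝ (Fin m) → ℝ := fun z => max (z i) 0 * F z with hHdef
  have hknng : ∀ z : EuclideanSpace ℝ (Fin m), 0 ≤ k (‖z‖ ^ 2) := fun z => hknn _ (sq_nonneg _)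
  have hkle : ∀ z : EuclideanSpace ℝ (Fin m), k (‖z‖ ^ 2) ≤ α * Real.exp (-β * ‖z‖ ^ 2) :=
    fun z => hdecay _ (sq_nonneg _)
  have hkm : Measurable fun z : EuclideanSpace ℝ (Fin m) => k (‖z‖ ^ 2) :=
    hmeas.comp ((continuous_norm.pow 2).measurable)
  have hFm : Measurable F := (measurable_coord m i).mul hkm
  have hGm : Measurable G := ((measurable_coord m i).pow_const 2).mul hkm
  have hHm : Measurable H := ((measurable_coord m i).max measurable_const).mul hFm
  have key2 : ∀ z : EuclideanSpace ℝ (Fin m),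
      ‖z‖ ^ 2 * Real.exp (-β * ‖z‖ ^ 2) ≤ (2 / β) * Real.exp (-(β / 2) * ‖z‖ ^ 2) :=
    fun z => key_bound (‖z‖ ^ 2) hβ
  have key1 : ∀ z : EuclideanSpace ℝ (Fin m),
      ‖z‖ * Real.exp (-β * ‖z‖ ^ 2) ≤ (1 + 2 / β) * Real.exp (-(β / 2) * ‖z‖ ^ 2) := by
    intro z
    have h1 : ‖z‖ ≤ 1 + ‖z‖ ^ 2 := by nlinarith [sq_nonneg (‖z‖ - 1), norm_nonneg z]
    have h3 : Real.exp (-β * ‖z‖ ^ 2) ≤ Real.exp (-(β / 2) * ‖z‖ ^ 2) :=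
      Real.exp_le_exp.2 (by nlinarith [sq_nonneg ‖z‖])
    nlinarith [mul_le_mul_of_nonneg_right h1 (Real.exp_pos (-β * ‖z‖ ^ 2)).le, key2 z, h3]
  have hz2 : ∀ z : EuclideanSpace ℝ (Fin m), (z i) ^ 2 ≤ ‖z‖ ^ 2 := by
    intro z
    have h := abs_coord_le m i z
    nlinarith [abs_nonneg (z i), sq_abs (z i)]
  -- pointwise bound for the second-moment-type integrand
  have hGpt : ∀ z : EuclideanSpace ℝ (Fin m),
      (z i) ^ 2 * k (‖z‖ ^ 2) ≤ α * (2 / β) * Real.exp (-(β / 2) * ‖z‖ ^ 2) := by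
    intro z
    calc (z i) ^ 2 * k (‖z‖ ^ 2)
        ≤ ‖z‖ ^ 2 * (α * Real.exp (-β * ‖z‖ ^ 2)) :=
          mul_le_mul (hz2 z) (hkle z) (hknng z) (sq_nonneg _)
      _ = α * (‖z‖ ^ 2 * Real.exp (-β * ‖z‖ ^ 2)) := by ring
      _ ≤ α * ((2 / β) * Real.exp (-(β / 2) * ‖z‖ ^ 2)) :=
          mul_le_mul_of_nonneg_left (key2 z) hα.le
      _ = α * (2 / β) * Real.exp (-(β / 2) * ‖z‖ ^ 2) := by ring
  have hFnorm : ∀ z : EuclideanSpace ℝ (Fin m), ‖F z‖ = |z i| * k (‖z‖ ^ 2) := by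
    intro z
    simp only [hFdef, Real.norm_eq_abs, abs_mul, abs_of_nonneg (hknng z)]
  have hFb : ∀ z : EuclideanSpace ℝ (Fin m),
      ‖F z‖ ≤ α * (1 + 2 / β) * Real.exp (-(β / 2) * ‖z‖ ^ 2) := by
    intro z
    rw [hFnorm z]
    calc |z i| * k (‖z‖ ^ 2)
        ≤ ‖z‖ * (α * Real.exp (-β * ‖z‖ ^ 2)) :=
          mul_le_mul (abs_coord_le m i z) (hkle z) (hknng z) (norm_nonneg _)
      _ = α * (‖z‖ * Real.exp (-β * ‖z‖ ^ 2)) := by ring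
      _ ≤ α * ((1 + 2 / β) * Real.exp (-(β / 2) * ‖z‖ ^ 2)) :=
          mul_le_mul_of_nonneg_left (key1 z) hα.le
      _ = α * (1 + 2 / β) * Real.exp (-(β / 2) * ‖z‖ ^ 2) := by ring
  have habsmax : ∀ z : EuclideanSpace ℝ (Fin m), max (z i) 0 * ‖F z‖ ≤ (z i) ^ 2 * k (‖z‖ ^ 2) := by
    intro z
    have h0 : max (z i) 0 ≤ |z i| := max_le (le_abs_self _) (abs_nonneg _)
    calc max (z i) 0 * ‖F z‖ ≤ |z i| * ‖F z‖ :=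
          mul_le_mul_of_nonneg_right h0 (norm_nonneg _)
      _ = (z i) ^ 2 * k (‖z‖ ^ 2) := by
          rw [hFnorm z, ← mul_assoc, abs_mul_abs_self, ← sq]
  have hgauss2 : Integrable fun z : EuclideanSpace ℝ (Fin m) =>
      Real.exp (-(β / 2) * ‖z‖ ^ 2) := integrable_gauss m (half_pos hβ)
  have hFi : Integrable F :=
    Integrable.mono' (hgauss2.const_mul (α * (1 + 2 / β))) hFm.aestronglyMeasurable
      (Filter.Eventually.of_forall hFb)
  have hHnb : ∀ z : EuclideanSpace ℝ (Fin m),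
      ‖max (z i) 0 * ‖F z‖‖ ≤ α * (2 / β) * Real.exp (-(β / 2) * ‖z‖ ^ 2) := by
    intro z
    rw [Real.norm_eq_abs, abs_of_nonneg (mul_nonneg (le_max_right _ _) (norm_nonneg _))]
    exact (habsmax z).trans (hGpt z)
  have hHnormi : Integrable fun z : EuclideanSpace ℝ (Fin m) => max (z i) 0 * ‖F z‖ :=
    Integrable.mono' (hgauss2.const_mul (α * (2 / β)))
      (((measurable_coord m i).max measurable_const).mul hFm.norm).aestronglyMeasurable
      (Filter.Eventually.of_forall hHnb)
  have hHi : Integrable H := by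
    refine Integrable.mono' (hgauss2.const_mul (α * (2 / β))) hHm.aestronglyMeasurable
      (Filter.Eventually.of_forall fun z => ?_)
    simp only [hHdef, Real.norm_eq_abs, abs_mul, abs_of_nonneg (le_max_right (z i) 0)]
    rw [← Real.norm_eq_abs]
    exact (habsmax z).trans (hGpt z)
  have hGi : Integrable G := by
    refine Integrable.mono' (hgauss2.const_mul (α * (2 / β))) hGm.aestronglyMeasurable
      (Filter.Eventually.of_forall fun z => ?_)
    have : ‖G z‖ = (z i) ^ 2 * k (‖z‖ ^ 2) := by
      simp only [hGdef, Real.norm_eq_abs, abs_mul, abs_of_nonneg (hknng z), abs_of_nonneg (sq_nonneg (z i))]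
    rw [this]; exact hGpt z
  -- the full integral of the odd function F vanishes
  have hzero : ∫ z, F z = 0 := by
    have h1 := integral_comp_neg' m F
    have h2 : ∀ z : EuclideanSpace ℝ (Fin m), F (-z) = -F z := by
      intro z; simp [hFdef]
    simp_rw [h2] at h1
    rw [integral_neg] at h1
    linarith
  have hcompl : ∀ b : ℝ,
      (∫ z in {z : EuclideanSpace ℝ (Fin m) | z i < b}, F z) =
        -∫ z in {z : EuclideanSpace ℝ (Fin m) | b ≤ z i}, F z := by
    intro b
    have hs : MeasurableSet {z : EuclideanSpace ℝ (Fin m) | b ≤ z i} :=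
      measurableSet_le measurable_const (measurable_coord m i)
    have hsum := integral_add_compl hs hFi
    have hce : {z : EuclideanSpace ℝ (Fin m) | b ≤ z i}ᶜ =
        {z : EuclideanSpace ℝ (Fin m) | z i < b} := by
      ext z; simp [not_le]
    rw [hce, hzero] at hsum
    linarith
  have hGsplit : ∀ z : EuclideanSpace ℝ (Fin m), H z + H (-z) = G z := by
    intro z
    have hz : (-z) i = -(z i) := by simp
    simp only [hHdef, hFdef, hGdef, hz, norm_neg]
    rcases le_total 0 (z i) with h | h
    · rw [max_eq_left h, max_eq_right (neg_nonpos.2 h)]; ring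
    · rw [max_eq_right h, max_eq_left (neg_nonneg.2 h)]; ring
  have hhalf : ∫ z, H z = (1 / 2) * ∫ z, G z := by
    have hHneg := integrable_comp_neg' m H hHi
    have hcalc : ∫ z, G z = 2 * ∫ z, H z := by
      calc ∫ z, G z = ∫ z, (H z + H (-z)) :=
            integral_congr_ae (Filter.Eventually.of_forall fun z => (hGsplit z).symm)
        _ = (∫ z, H z) + ∫ z, H (-z) := integral_add hHi hHneg
        _ = 2 * ∫ z, H z := by rw [integral_comp_neg' m H]; ring
    linarith
  calc (∫ b in Set.Ioi (0 : ℝ), ∫ z in {z : EuclideanSpace ℝ (Fin m) | z i < b}, F z)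
      = ∫ b in Set.Ioi (0 : ℝ),
          -∫ z in {z : EuclideanSpace ℝ (Fin m) | b ≤ z i}, F z :=
        integral_congr_ae (Filter.Eventually.of_forall fun b => hcompl b)
    _ = -∫ b in Set.Ioi (0 : ℝ), ∫ z in {z : EuclideanSpace ℝ (Fin m) | b ≤ z i}, F z :=
        integral_neg _
    _ = -∫ z : EuclideanSpace ℝ (Fin m), max (z i) 0 * F z := by
        rw [fubini_part m i F hFm hHnormi]
    _ = -(1 / 2) * ∫ z, G z := by
        rw [show (∫ z : EuclideanSpace ℝ (Fin m), max (z i) 0 * F z) = ∫ z, H z from rfl, hhalf]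
        ring

end FirstMomentAux

/-- The integral of the first half-space moment over all boundary distances equals minus
half the second full-space moment:
`∫_0^∞ (∫_{{z : z_m < b}} z_m k(|z|²) dz) db = -(1/2) ∫_{ℝ^m} z_m² k(|z|²) dz = -m_2/2`. -/
theorem integral_first_moment (m : ℕ) (hm : 0 < m) (k : ℝ → ℝ) (hmeas : Measurable k)
    (hknn : ∀ s, 0 ≤ s → 0 ≤ k s)
    (α β : ℝ) (hα : 0 < α) (hβ : 0 < β)
    (hdecay : ∀ s, 0 ≤ s → k s ≤ α * Real.exp (-β * s)) :
    (∫ b in Set.Ioi (0 : ℝ),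
        ∫ z in {z : EuclideanSpace ℝ (Fin m) | z ⟨m - 1, Nat.sub_lt hm Nat.one_pos⟩ < b},
          z ⟨m - 1, Nat.sub_lt hm Nat.one_pos⟩ * k (‖z‖ ^ 2)) =
      -(1 / 2) * ∫ z : EuclideanSpace ℝ (Fin m),
          (z ⟨m - 1, Nat.sub_lt hm Nat.one_pos⟩) ^ 2 * k (‖z‖ ^ 2) ∧
    (∫ b in Set.Ioi (0 : ℝ),
        ∫ z in {z : EuclideanSpace ℝ (Fin m) | z ⟨m - 1, Nat.sub_lt hm Nat.one_pos⟩ < b},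
          z ⟨m - 1, Nat.sub_lt hm Nat.one_pos⟩ * k (‖z‖ ^ 2)) =
      -(1 / 2) * ∫ z : EuclideanSpace ℝ (Fin m), (z ⟨0, hm⟩) ^ 2 * k (‖z‖ ^ 2) := by
  have h1 := FirstMomentAux.main_aux m ⟨m - 1, Nat.sub_lt hm Nat.one_pos⟩ k hmeas hknn α β hα hβ
    hdecay
  refine ⟨h1, ?_⟩
  rw [h1, FirstMomentAux.swap_coord m ⟨m - 1, Nat.sub_lt hm Nat.one_pos⟩ ⟨0, hm⟩ k]
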